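/- Let T0, Tpost, N0 be positive integers and ζ > 0. Let L₀, R₀ be real T0×N0 matrices, L₁, R₁ ∈ ℝ^{T0}, X_pre = L₀ + R₀, Y_pre = L₁ + R₁; let X_post be a real Tpost×N0 matrix and Π a real Tpost×T0 matrix. Let W be a real symmetric positive semidefinite T0×T0 matrix and P a real symmetric T0×T0 matrix with 0 ⪯ P ⪯ I. Let Δ be the unit simplex in ℝ^{N0}, F(ω) = (Y_pre − X_pre ω)ᵀW(Y_pre − X_pre ω) + ζ²T0‖ω‖₂², H(ω) = (L₁ − L₀ω)ᵀP(L₁ − L₀ω) + ζ²T0‖ω‖₂², with ω̂ minimizing F over Δ and ω* minimizing H over Δ. Set Q = (1/T0)X_preᵀW X_pre + ζ²I, e^L = L₁ − L₀ω*, e^R = R₁ − R₀ω*, A₁ = (1/T0)‖L₀ᵀ(W − P)e^L‖_{Q^{−1}}, A₂ = (1/T0)‖R₀ᵀW e^L‖_{Q^{−1}}, A₃ = (1/√T0)·√((e^R)ᵀW e^R), C = X_post − Π X_pre, and 𝒫 = ‖C Q^{−1/2}‖_op (operator norm, with Q^{−1/2} the inverse of the positive definite square root of Q). Then ‖C(ω*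 − ω̂)‖₂ ≤ 𝒫 · (A₁ + A₂ + A₃). -/

import Mathlib

open Matrix

namespace Stmt17Aux

lemma dot_self_nonneg {k : ℕ} (v : Fin k → ℝ) : 0 ≤ v ⬝ᵥ v :=
  Finset.sum_nonneg fun i _ => mul_self_nonneg _

lemma cs_dot {k : ℕ} (v w : Fin k → ℝ) :
    v ⬝ᵥ w ≤ Real.sqrt (v ⬝ᵥ v) * Real.sqrt (w ⬝ᵥ w) := by
  have h := Finset.sum_mul_sq_le_sq_mul_sq Finset.univ v w
  have h2 : (v ⬝ᵥ w) ^ 2 ≤ (v ⬝ᵥ v) * (w ⬝ᵥ w) := by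
    simpa [dotProduct, pow_two] using h
  calc v ⬝ᵥ w ≤ |v ⬝ᵥ w| := le_abs_self _
    _ = Real.sqrt ((v ⬝ᵥ w) ^ 2) := (Real.sqrt_sq_eq_abs _).symm
    _ ≤ Real.sqrt ((v ⬝ᵥ v) * (w ⬝ᵥ w)) := Real.sqrt_le_sqrt h2
    _ = _ := Real.sqrt_mul (dot_self_nonneg v) _

lemma dot_mulVec_t {k l : ℕ} (M : Matrix (Fin k) (Fin l) ℝ) (x : Fin k → ℝ) (y : Fin l → ℝ) :
    x ⬝ᵥ (M *ᵥ y) = (Mᵀ *ᵥ x) ⬝ᵥ y := by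
  rw [Matrix.dotProduct_mulVec, Matrix.mulVec_transpose]

lemma dot_t_mulVec {k l : ℕ} (M : Matrix (Fin k) (Fin l) ℝ) (x : Fin l → ℝ) (y : Fin k → ℝ) :
    x ⬝ᵥ (Mᵀ *ᵥ y) = (M *ᵥ x) ⬝ᵥ y := by
  rw [dot_mulVec_t, Matrix.transpose_transpose]

lemma herm_t {k : ℕ} {S : Matrix (Fin k) (Fin k) ℝ} (hS : S.IsHermitian) : Sᵀ = S := by
  rw [← Matrix.conjTranspose_eq_transpose_of_trivial]; exact hS.eq

lemma dot_symm_swap {k : ℕ} {S : Matrix (Fin k) (Fin k) ℝ} (hS : Sᵀ = S)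
    (u v : Fin k → ℝ) : u ⬝ᵥ (S *ᵥ v) = v ⬝ᵥ (S *ᵥ u) := by
  rw [dot_mulVec_t, hS, dotProduct_comm]

lemma psd_nonneg {k : ℕ} {S : Matrix (Fin k) (Fin k) ℝ} (hS : S.PosSemidef) (x : Fin k → ℝ) :
    0 ≤ x ⬝ᵥ (S *ᵥ x) := by simpa using hS.dotProduct_mulVec_nonneg x

lemma psd_cs {k : ℕ} {S : Matrix (Fin k) (Fin k) ℝ} (hS : S.PosSemidef)
    (u v : Fin k → ℝ) :
    u ⬝ᵥ (S *ᵥ v) ≤ Real.sqrt (u ⬝ᵥ (S *ᵥ u)) * Real.sqrt (v ⬝ᵥ (S *ᵥ v)) := by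
  obtain ⟨B, hBsymm, hBB⟩ : ∃ B : Matrix (Fin k) (Fin k) ℝ, Bᵀ = B ∧ B * B = S :=
    open scoped MatrixOrder in
    ⟨CFC.sqrt S, herm_t (CFC.sqrt_nonneg S).posSemidef.1, CFC.sqrt_mul_sqrt_self S hS.nonneg⟩
  have key : ∀ x y : Fin k → ℝ, x ⬝ᵥ (S *ᵥ y) = (B *ᵥ x) ⬝ᵥ (B *ᵥ y) := by
    intro x y
    rw [← hBB, ← Matrix.mulVec_mulVec, dot_mulVec_t, hBsymm]
  rw [key, key, key]
  exact cs_dot _ _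

lemma dot_quad {k : ℕ} {S : Matrix (Fin k) (Fin k) ℝ} (hS : Sᵀ = S)
    (u v : Fin k → ℝ) (t : ℝ) :
    (u - t • v) ⬝ᵥ (S *ᵥ (u - t • v))
      = u ⬝ᵥ (S *ᵥ u) - 2 * t * (u ⬝ᵥ (S *ᵥ v)) + t ^ 2 * (v ⬝ᵥ (S *ᵥ v)) := by
  have hswap := dot_symm_swap hS v u
  have h : (u - t • v) ⬝ᵥ (S *ᵥ (u - t • v))
      = u ⬝ᵥ (S *ᵥ u) - t * (u ⬝ᵥ (S *ᵥ v)) - t * (v ⬝ᵥ (S *ᵥ u))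
        + t * (t * (v ⬝ᵥ (S *ᵥ v))) := by
    simp only [Matrix.mulVec_sub, Matrix.mulVec_smul, sub_dotProduct,
      dotProduct_sub, smul_dotProduct, dotProduct_smul, smul_eq_mul]
    ring
  rw [h, hswap]; ring

lemma dot_sq_expand {k : ℕ} (x d : Fin k → ℝ) (t : ℝ) :
    (x + t • d) ⬝ᵥ (x + t • d)
      = x ⬝ᵥ x + 2 * t * (x ⬝ᵥ d) + t ^ 2 * (d ⬝ᵥ d) := by
  have hc : d ⬝ᵥ x = x ⬝ᵥ d := dotProduct_comm d x
  simp only [add_dotProduct, dotProduct_add, smul_dotProduct,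
    dotProduct_smul, smul_eq_mul, hc]
  ring

lemma phi_expand {T N : ℕ} {S : Matrix (Fin T) (Fin T) ℝ} (hS : Sᵀ = S) (c : ℝ)
    (b : Fin T → ℝ) (M : Matrix (Fin T) (Fin N) ℝ) (x d : Fin N → ℝ) (t : ℝ) :
    (b - M *ᵥ (x + t • d)) ⬝ᵥ (S *ᵥ (b - M *ᵥ (x + t • d))) + c * ((x + t • d) ⬝ᵥ (x + t • d))
      = ((b - M *ᵥ x) ⬝ᵥ (S *ᵥ (b - M *ᵥ x)) + c * (x ⬝ᵥ x))
        + t * (-2 * ((b - M *ᵥ x) ⬝ᵥ (S *ᵥ (M *ᵥ d))) + 2 * c * (x ⬝ᵥ d))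
        + t ^ 2 * ((M *ᵥ d) ⬝ᵥ (S *ᵥ (M *ᵥ d)) + c * (d ⬝ᵥ d)) := by
  have h1 : b - M *ᵥ (x + t • d) = (b - M *ᵥ x) - t • (M *ᵥ d) := by
    rw [Matrix.mulVec_add, Matrix.mulVec_smul]; abel
  rw [h1, dot_quad hS, dot_sq_expand]
  ring

lemma lin_nonneg {a b : ℝ} (hb : 0 ≤ b)
    (h : ∀ t : ℝ, 0 < t → t ≤ 1 → 0 ≤ t * a + t ^ 2 * b) : 0 ≤ a := by
  by_contra hneg
  push_neg at hneg
  have hb1 : (0:ℝ) < b + 1 := by linarith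
  have hta : 0 < -a / (b + 1) := div_pos (by linarith) hb1
  set t := min 1 (-a / (b + 1)) with ht
  have ht0 : 0 < t := lt_min one_pos hta
  have ht1 : t ≤ 1 := min_le_left _ _
  have h2 := h t ht0 ht1
  have h3 : 0 ≤ a + t * b := by nlinarith
  have htb : t * b ≤ (-a / (b + 1)) * b :=
    mul_le_mul_of_nonneg_right (min_le_right _ _) hb
  have hlt : (-a / (b + 1)) * b < -a := by
    rw [div_mul_eq_mul_div, div_lt_iff₀ hb1]
    nlinarith
  linarith

lemma opt_dir {T N : ℕ} {S : Matrix (Fin T) (Fin T) ℝ} (hS : S.PosSemidef)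
    {c : ℝ} (hc : 0 ≤ c) (b : Fin T → ℝ) (M : Matrix (Fin T) (Fin N) ℝ)
    {Δ : Set (Fin N → ℝ)}
    (hconv : ∀ x ∈ Δ, ∀ y ∈ Δ, ∀ t : ℝ, 0 ≤ t → t ≤ 1 → x + t • (y - x) ∈ Δ)
    {φ : (Fin N → ℝ) → ℝ}
    (hφ : ∀ ω, φ ω = (b - M *ᵥ ω) ⬝ᵥ (S *ᵥ (b - M *ᵥ ω)) + c * (ω ⬝ᵥ ω))
    {x : Fin N → ℝ} (hx : x ∈ Δ) (hmin : ∀ ω ∈ Δ, φ x ≤ φ ω)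
    {y : Fin N → ℝ} (hy : y ∈ Δ) :
    0 ≤ -2 * ((b - M *ᵥ x) ⬝ᵥ (S *ᵥ (M *ᵥ (y - x)))) + 2 * c * (x ⬝ᵥ (y - x)) := by
  apply lin_nonneg (b := (M *ᵥ (y - x)) ⬝ᵥ (S *ᵥ (M *ᵥ (y - x))) + c * ((y - x) ⬝ᵥ (y - x)))
  · exact add_nonneg (psd_nonneg hS _) (mul_nonneg hc (dot_self_nonneg _))
  · intro t ht0 ht1
    have hmem := hconv x hx y hy t (le_of_lt ht0) ht1
    have hle := hmin _ hmem
    rw [hφ, hφ, phi_expand (herm_t hS.1) c b M x (y - x) t] at hle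
    linarith

end Stmt17Aux

open Stmt17Aux

set_option maxHeartbeats 1600000 in
theorem stmt17 (T0 Tpost N0 : ℕ) (hT0 : 0 < T0) (hTpost : 0 < Tpost) (hN0 : 0 < N0)
    (ζ : ℝ) (hζ : 0 < ζ)
    (L₀ R₀ : Matrix (Fin T0) (Fin N0) ℝ) (L₁ R₁ : Fin T0 → ℝ)
    (Xpre : Matrix (Fin T0) (Fin N0) ℝ) (hXpre : Xpre = L₀ + R₀)
    (Ypre : Fin T0 → ℝ) (hYpre : Ypre = L₁ + R₁)
    (Xpost : Matrix (Fin Tpost) (Fin N0) ℝ)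
    (Pm : Matrix (Fin Tpost) (Fin T0) ℝ)
    (W P : Matrix (Fin T0) (Fin T0) ℝ)
    (hW : W.PosSemidef) (hP : P.PosSemidef)
    (hPI : ((1 : Matrix (Fin T0) (Fin T0) ℝ) - P).PosSemidef)
    (Δ : Set (Fin N0 → ℝ))
    (hΔ : Δ = {ω : Fin N0 → ℝ | (∀ j, 0 ≤ ω j) ∧ ∑ j, ω j = 1})
    (F H : (Fin N0 → ℝ) → ℝ)
    (hF : ∀ ω : Fin N0 → ℝ,
      F ω = (Ypre - Xpre *ᵥ ω) ⬝ᵥ (W *ᵥ (Ypre - Xpre *ᵥ ω)) + ζ^2 * (T0 : ℝ) * (ω ⬝ᵥ ω))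
    (hH : ∀ ω : Fin N0 → ℝ,
      H ω = (L₁ - L₀ *ᵥ ω) ⬝ᵥ (P *ᵥ (L₁ - L₀ *ᵥ ω)) + ζ^2 * (T0 : ℝ) * (ω ⬝ᵥ ω))
    (ωhat ωstar : Fin N0 → ℝ)
    (hωhat : ωhat ∈ Δ ∧ ∀ ω ∈ Δ, F ωhat ≤ F ω)
    (hωstar : ωstar ∈ Δ ∧ ∀ ω ∈ Δ, H ωstar ≤ H ω)
    (Q : Matrix (Fin N0) (Fin N0) ℝ)
    (hQ : Q = ((1 : ℝ)/(T0 : ℝ)) • (Xpreᵀ * W * Xpre) + ζ^2 • (1 : Matrix (Fin N0) (Fin N0) ℝ))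
    (eL eR : Fin T0 → ℝ)
    (heL : eL = L₁ - L₀ *ᵥ ωstar) (heR : eR = R₁ - R₀ *ᵥ ωstar)
    (A₁ A₂ A₃ : ℝ)
    (hA₁ : A₁ = (1/(T0 : ℝ)) *
      Real.sqrt ((L₀ᵀ *ᵥ ((W - P) *ᵥ eL)) ⬝ᵥ (Q⁻¹ *ᵥ (L₀ᵀ *ᵥ ((W - P) *ᵥ eL)))))
    (hA₂ : A₂ = (1/(T0 : ℝ)) *
      Real.sqrt ((R₀ᵀ *ᵥ (W *ᵥ eL)) ⬝ᵥ (Q⁻¹ *ᵥ (R₀ᵀ *ᵥ (W *ᵥ eL)))))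
    (hA₃ : A₃ = (1/Real.sqrt (T0 : ℝ)) * Real.sqrt (eR ⬝ᵥ (W *ᵥ eR)))
    (C : Matrix (Fin Tpost) (Fin N0) ℝ) (hC : C = Xpost - Pm * Xpre)
    (Qsqrt : Matrix (Fin N0) (Fin N0) ℝ)
    (hQsqrt : Qsqrt.PosDef ∧ Qsqrt * Qsqrt = Q)
    (Popnorm : ℝ)
    (hPopnorm : Popnorm = sSup {x : ℝ | ∃ v : Fin N0 → ℝ, Real.sqrt (v ⬝ᵥ v) = 1 ∧
      x = Real.sqrt (((C * Qsqrt⁻¹) *ᵥ v) ⬝ᵥ ((C * Qsqrt⁻¹) *ᵥ v))}) :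
    Real.sqrt ((C *ᵥ (ωstar - ωhat)) ⬝ᵥ (C *ᵥ (ωstar - ωhat))) ≤
      Popnorm * (A₁ + A₂ + A₃) := by
  classical
  have hT0R : (0:ℝ) < T0 := Nat.cast_pos.mpr hT0
  set c : ℝ := ζ ^ 2 * (T0 : ℝ) with hc_def
  have hc : 0 ≤ c := by rw [hc_def]; positivity
  have hWt : Wᵀ = W := herm_t hW.1
  have hPt : Pᵀ = P := herm_t hP.1
  have hWPt : (W - P)ᵀ = W - P := by rw [Matrix.transpose_sub, hWt, hPt]
  -- convexity of the simplex
  have hconv : ∀ x ∈ Δ, ∀ y ∈ Δ, ∀ t : ℝ, 0 ≤ t → t ≤ 1 → x + t • (y - x) ∈ Δ := by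
    intro x hx y hy t ht0 ht1
    rw [hΔ] at hx hy ⊢
    obtain ⟨hx0, hx1⟩ := hx
    obtain ⟨hy0, hy1⟩ := hy
    constructor
    · intro j
      have hj : (x + t • (y - x)) j = (1 - t) * x j + t * y j := by
        simp [Pi.add_apply, Pi.smul_apply, Pi.sub_apply, smul_eq_mul]; ring
      rw [hj]
      exact add_nonneg (mul_nonneg (by linarith) (hx0 j)) (mul_nonneg ht0 (hy0 j))
    · have hsum : ∑ j, (x + t • (y - x)) j = ∑ j, ((1 - t) * x j + t * y j) := by
        apply Finset.sum_congr rfl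
        intro j _
        simp [Pi.add_apply, Pi.smul_apply, Pi.sub_apply, smul_eq_mul]; ring
      rw [hsum, Finset.sum_add_distrib, ← Finset.mul_sum, ← Finset.mul_sum, hx1, hy1]
      ring
  -- main direction vector
  set d : Fin N0 → ℝ := ωstar - ωhat with hd_def
  -- Qsqrt facts
  have hQs := hQsqrt.1
  have hQst : Qsqrtᵀ = Qsqrt := herm_t hQs.1
  have hdet : IsUnit Qsqrt.det := hQs.det_pos.ne'.isUnit
  have hinv_mul : Qsqrt⁻¹ * Qsqrt = 1 := Matrix.nonsing_inv_mul _ hdet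
  have hmul_inv : Qsqrt * Qsqrt⁻¹ = 1 := Matrix.mul_nonsing_inv _ hdet
  have hinvt : (Qsqrt⁻¹)ᵀ = Qsqrt⁻¹ := by rw [Matrix.transpose_nonsing_inv, hQst]
  set w : Fin N0 → ℝ := Qsqrt *ᵥ d with hw_def
  set s : ℝ := Real.sqrt (w ⬝ᵥ w) with hs_def
  have hs0 : 0 ≤ s := Real.sqrt_nonneg _
  have hssq : s * s = w ⬝ᵥ w := Real.mul_self_sqrt (dot_self_nonneg w)
  have hwQ : w ⬝ᵥ w = d ⬝ᵥ (Q *ᵥ d) := by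
    rw [hw_def, dot_mulVec_t Qsqrt (Qsqrt *ᵥ d) d, hQst, Matrix.mulVec_mulVec, hQsqrt.2,
      dotProduct_comm]
  -- quadratic form of Q
  have hQd : (T0:ℝ) * (d ⬝ᵥ (Q *ᵥ d))
      = (Xpre *ᵥ d) ⬝ᵥ (W *ᵥ (Xpre *ᵥ d)) + c * (d ⬝ᵥ d) := by
    have h1 : d ⬝ᵥ ((Xpreᵀ * W * Xpre) *ᵥ d) = (Xpre *ᵥ d) ⬝ᵥ (W *ᵥ (Xpre *ᵥ d)) := by
      rw [Matrix.mul_assoc, ← Matrix.mulVec_mulVec, ← Matrix.mulVec_mulVec,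
        dot_t_mulVec]
    rw [hQ]
    simp only [Matrix.add_mulVec, Matrix.smul_mulVec, Matrix.one_mulVec,
      dotProduct_add, dotProduct_smul, smul_eq_mul]
    rw [h1, hc_def]
    field_simp
  -- Q⁻¹ in terms of Qsqrt⁻¹
  have hQinv : ∀ g : Fin N0 → ℝ, g ⬝ᵥ (Q⁻¹ *ᵥ g) = (Qsqrt⁻¹ *ᵥ g) ⬝ᵥ (Qsqrt⁻¹ *ᵥ g) := by
    intro g
    rw [← hQsqrt.2, Matrix.mul_inv_rev, ← Matrix.mulVec_mulVec,
      dot_mulVec_t Qsqrt⁻¹ g (Qsqrt⁻¹ *ᵥ g), hinvt]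
  -- Cauchy-Schwarz against s
  have hgd : ∀ g : Fin N0 → ℝ, g ⬝ᵥ d ≤ Real.sqrt (g ⬝ᵥ (Q⁻¹ *ᵥ g)) * s := by
    intro g
    have h1 : g ⬝ᵥ d = (Qsqrt⁻¹ *ᵥ g) ⬝ᵥ w := by
      rw [hw_def, dot_mulVec_t Qsqrt (Qsqrt⁻¹ *ᵥ g) d, hQst, Matrix.mulVec_mulVec,
        hmul_inv, Matrix.one_mulVec]
    rw [h1, hQinv g, hs_def]
    exact cs_dot _ _
  -- optimality, expansions
  have hF_opt : 0 ≤ -2 * ((Ypre - Xpre *ᵥ ωhat) ⬝ᵥ (W *ᵥ (Xpre *ᵥ (ωstar - ωhat))))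
      + 2 * c * (ωhat ⬝ᵥ (ωstar - ωhat)) :=
    opt_dir hW hc Ypre Xpre hconv hF hωhat.1 hωhat.2 hωstar.1
  rw [← hd_def] at hF_opt
  have hH_opt : 0 ≤ -2 * ((L₁ - L₀ *ᵥ ωstar) ⬝ᵥ (P *ᵥ (L₀ *ᵥ (ωhat - ωstar))))
      + 2 * c * (ωstar ⬝ᵥ (ωhat - ωstar)) :=
    opt_dir hP hc L₁ L₀ hconv hH hωstar.1 hωstar.2 hωhat.1
  have hnegd : ωhat - ωstar = -d := by rw [hd_def, neg_sub]
  rw [hnegd, ← heL] at hH_opt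
  simp only [Matrix.mulVec_neg, dotProduct_neg, neg_dotProduct, mul_neg,
    neg_neg, neg_mul] at hH_opt
  have hpt1 : ωhat + (1:ℝ) • d = ωstar := by rw [one_smul, hd_def]; abel
  have hpt2 : ωstar + (1:ℝ) • (ωhat - ωstar) = ωhat := by rw [one_smul]; abel
  have hexpF := phi_expand hWt c Ypre Xpre ωhat d 1
  rw [hpt1, ← hF ωstar, ← hF ωhat] at hexpF
  simp only [one_pow, one_mul] at hexpF
  have hexpF2 := phi_expand hWt c Ypre Xpre ωstar (ωhat - ωstar) 1
  rw [hpt2, ← hF ωhat, ← hF ωstar, hnegd] at hexpF2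
  simp only [one_pow, one_mul, Matrix.mulVec_neg, dotProduct_neg,
    neg_dotProduct, mul_neg, neg_neg, neg_mul] at hexpF2
  have hexpH := phi_expand hPt c L₁ L₀ ωstar (ωhat - ωstar) 1
  rw [hpt2, ← hH ωhat, ← hH ωstar, hnegd, ← heL] at hexpH
  simp only [one_pow, one_mul, Matrix.mulVec_neg, dotProduct_neg,
    neg_dotProduct, mul_neg, neg_neg, neg_mul] at hexpH
  -- split the Ypre term
  have hu : Ypre - Xpre *ᵥ ωstar = eL + eR := by
    rw [hYpre, hXpre, heL, heR, Matrix.add_mulVec]; abel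
  have hsplit : (Ypre - Xpre *ᵥ ωstar) ⬝ᵥ (W *ᵥ (Xpre *ᵥ d))
      = eL ⬝ᵥ (W *ᵥ (L₀ *ᵥ d)) + eL ⬝ᵥ (W *ᵥ (R₀ *ᵥ d)) + eR ⬝ᵥ (W *ᵥ (Xpre *ᵥ d)) := by
    rw [hu, add_dotProduct]
    have h1 : eL ⬝ᵥ (W *ᵥ (Xpre *ᵥ d))
        = eL ⬝ᵥ (W *ᵥ (L₀ *ᵥ d)) + eL ⬝ᵥ (W *ᵥ (R₀ *ᵥ d)) := by
      rw [hXpre, Matrix.add_mulVec, Matrix.mulVec_add, dotProduct_add]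
    rw [h1]
  -- linear terms as dot products with d
  set u₁ : Fin N0 → ℝ := L₀ᵀ *ᵥ ((W - P) *ᵥ eL) with hu₁_def
  set u₂ : Fin N0 → ℝ := R₀ᵀ *ᵥ (W *ᵥ eL) with hu₂_def
  have ht1 : eL ⬝ᵥ ((W - P) *ᵥ (L₀ *ᵥ d)) = u₁ ⬝ᵥ d := by
    rw [dot_symm_swap hWPt eL (L₀ *ᵥ d), dotProduct_comm (L₀ *ᵥ d),
      dot_mulVec_t L₀ ((W - P) *ᵥ eL) d, hu₁_def]
  have ht1' : eL ⬝ᵥ ((W - P) *ᵥ (L₀ *ᵥ d))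
      = eL ⬝ᵥ (W *ᵥ (L₀ *ᵥ d)) - eL ⬝ᵥ (P *ᵥ (L₀ *ᵥ d)) := by
    rw [Matrix.sub_mulVec, dotProduct_sub]
  have ht2 : eL ⬝ᵥ (W *ᵥ (R₀ *ᵥ d)) = u₂ ⬝ᵥ d := by
    rw [dot_symm_swap hWt eL (R₀ *ᵥ d), dotProduct_comm (R₀ *ᵥ d),
      dot_mulVec_t R₀ (W *ᵥ eL) d, hu₂_def]
  -- core inequality
  have hcore : (T0:ℝ) * (d ⬝ᵥ (Q *ᵥ d))
      ≤ -(u₁ ⬝ᵥ d) - u₂ ⬝ᵥ d - eR ⬝ᵥ (W *ᵥ (Xpre *ᵥ d)) := by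
    have h1 := hF_opt
    have h2 := hH_opt
    have h3 := hexpF
    have h4 := hexpF2
    have h5 := hexpH
    rw [hsplit] at h4
    linarith [ht1, ht1', ht2, hQd]
  -- bounds for the three terms
  have hb1 : -(u₁ ⬝ᵥ d) ≤ Real.sqrt (u₁ ⬝ᵥ (Q⁻¹ *ᵥ u₁)) * s := by
    have h := hgd (-u₁)
    simp only [neg_dotProduct, Matrix.mulVec_neg, dotProduct_neg,
      neg_neg] at h
    exact h
  have hb2 : -(u₂ ⬝ᵥ d) ≤ Real.sqrt (u₂ ⬝ᵥ (Q⁻¹ *ᵥ u₂)) * s := by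
    have h := hgd (-u₂)
    simp only [neg_dotProduct, Matrix.mulVec_neg, dotProduct_neg,
      neg_neg] at h
    exact h
  have hb3 : -(eR ⬝ᵥ (W *ᵥ (Xpre *ᵥ d)))
      ≤ Real.sqrt (eR ⬝ᵥ (W *ᵥ eR)) * (Real.sqrt (T0:ℝ) * s) := by
    have h := psd_cs hW (-eR) (Xpre *ᵥ d)
    simp only [neg_dotProduct, Matrix.mulVec_neg, dotProduct_neg,
      neg_neg] at h
    have hq2 : Real.sqrt ((Xpre *ᵥ d) ⬝ᵥ (W *ᵥ (Xpre *ᵥ d))) ≤ Real.sqrt (T0:ℝ) * s := by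
      have hle : (Xpre *ᵥ d) ⬝ᵥ (W *ᵥ (Xpre *ᵥ d)) ≤ (T0:ℝ) * (w ⬝ᵥ w) := by
        have := mul_nonneg hc (dot_self_nonneg d)
        rw [hwQ]
        linarith [hQd]
      calc Real.sqrt ((Xpre *ᵥ d) ⬝ᵥ (W *ᵥ (Xpre *ᵥ d)))
          ≤ Real.sqrt ((T0:ℝ) * (w ⬝ᵥ w)) := Real.sqrt_le_sqrt hle
        _ = Real.sqrt (T0:ℝ) * Real.sqrt (w ⬝ᵥ w) := Real.sqrt_mul (le_of_lt hT0R) _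
        _ = Real.sqrt (T0:ℝ) * s := by rw [← hs_def]
    calc -(eR ⬝ᵥ (W *ᵥ (Xpre *ᵥ d)))
        ≤ Real.sqrt (eR ⬝ᵥ (W *ᵥ eR)) * Real.sqrt ((Xpre *ᵥ d) ⬝ᵥ (W *ᵥ (Xpre *ᵥ d))) := h
      _ ≤ Real.sqrt (eR ⬝ᵥ (W *ᵥ eR)) * (Real.sqrt (T0:ℝ) * s) :=
          mul_le_mul_of_nonneg_left hq2 (Real.sqrt_nonneg _)
  -- main scalar inequality
  have hmain : (T0:ℝ) * (s * s)
      ≤ (Real.sqrt (u₁ ⬝ᵥ (Q⁻¹ *ᵥ u₁)) + Real.sqrt (u₂ ⬝ᵥ (Q⁻¹ *ᵥ u₂))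
        + Real.sqrt (T0:ℝ) * Real.sqrt (eR ⬝ᵥ (W *ᵥ eR))) * s := by
    have hss : s * s = d ⬝ᵥ (Q *ᵥ d) := by rw [hssq, hwQ]
    rw [hss]
    linarith [hcore, hb1, hb2, hb3]
  -- operator norm part
  set Mm : Matrix (Fin Tpost) (Fin N0) ℝ := C * Qsqrt⁻¹ with hMm_def
  set SS : Set ℝ := {x : ℝ | ∃ v : Fin N0 → ℝ, Real.sqrt (v ⬝ᵥ v) = 1 ∧
      x = Real.sqrt ((Mm *ᵥ v) ⬝ᵥ (Mm *ᵥ v))} with hSS_def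
  have hCd : C *ᵥ d = Mm *ᵥ w := by
    rw [hw_def, hMm_def, Matrix.mulVec_mulVec, Matrix.mul_assoc, hinv_mul, Matrix.mul_one]
  have hBdd : BddAbove SS := by
    refine ⟨Real.sqrt (∑ i, ∑ j, Mm i j ^ 2), ?_⟩
    rintro x ⟨v, hv1, rfl⟩
    have hvv : v ⬝ᵥ v = 1 := by rwa [Real.sqrt_eq_one] at hv1
    apply Real.sqrt_le_sqrt
    have hexp : (Mm *ᵥ v) ⬝ᵥ (Mm *ᵥ v) = ∑ i, (∑ j, Mm i j * v j) ^ 2 := by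
      simp [dotProduct, Matrix.mulVec, pow_two]
    rw [hexp]
    have hone : ∑ j, v j ^ 2 = 1 := by
      simpa [dotProduct, pow_two] using hvv
    calc ∑ i, (∑ j, Mm i j * v j) ^ 2
        ≤ ∑ i, (∑ j, Mm i j ^ 2) * (∑ j, v j ^ 2) :=
          Finset.sum_le_sum fun i _ => Finset.sum_mul_sq_le_sq_mul_sq _ _ _
      _ = ∑ i, ∑ j, Mm i j ^ 2 := by simp [hone]
  have hPop : Popnorm = sSup SS := hPopnorm
  have hPop0 : 0 ≤ Popnorm := by
    have i0 : Fin N0 := ⟨0, hN0⟩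
    set v₀ : Fin N0 → ℝ := fun j => if j = i0 then 1 else 0 with hv₀_def
    have hv₀ : v₀ ⬝ᵥ v₀ = 1 := by
      simp [dotProduct, hv₀_def, Finset.sum_ite_eq']
    have hmem : Real.sqrt ((Mm *ᵥ v₀) ⬝ᵥ (Mm *ᵥ v₀)) ∈ SS :=
      ⟨v₀, by rw [hv₀, Real.sqrt_one], rfl⟩
    have := le_csSup hBdd hmem
    rw [hPop]
    exact le_trans (Real.sqrt_nonneg _) this
  have hstepA : Real.sqrt ((C *ᵥ d) ⬝ᵥ (C *ᵥ d)) ≤ Popnorm * s := by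
    rcases eq_or_ne (w ⬝ᵥ w) 0 with h0 | h0
    · have hw0 : w = 0 := dotProduct_self_eq_zero.mp h0
      rw [hCd, hw0, Matrix.mulVec_zero]
      simp only [dotProduct_zero, Real.sqrt_zero]
      exact mul_nonneg hPop0 hs0
    · have hpos : 0 < w ⬝ᵥ w := lt_of_le_of_ne (dot_self_nonneg w) (Ne.symm h0)
      have hspos : 0 < s := Real.sqrt_pos.mpr hpos
      set v : Fin N0 → ℝ := s⁻¹ • w with hv_def
      have hvmem : Real.sqrt ((Mm *ᵥ v) ⬝ᵥ (Mm *ᵥ v)) ∈ SS := by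
        refine ⟨v, ?_, rfl⟩
        rw [hv_def, smul_dotProduct, dotProduct_smul, smul_eq_mul, smul_eq_mul]
        rw [show s⁻¹ * (s⁻¹ * (w ⬝ᵥ w)) = 1 by
          rw [← hssq]; field_simp]
        exact Real.sqrt_one
      have hle := le_csSup hBdd hvmem
      have heq : (C *ᵥ d) ⬝ᵥ (C *ᵥ d) = (s * s) * ((Mm *ᵥ v) ⬝ᵥ (Mm *ᵥ v)) := by
        rw [hCd, hv_def, Matrix.mulVec_smul, smul_dotProduct,
          dotProduct_smul, smul_eq_mul, smul_eq_mul]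
        field_simp
      rw [heq, Real.sqrt_mul (by positivity), Real.sqrt_mul_self hs0]
      calc s * Real.sqrt ((Mm *ᵥ v) ⬝ᵥ (Mm *ᵥ v)) ≤ s * sSup SS :=
            mul_le_mul_of_nonneg_left hle hs0
        _ = Popnorm * s := by rw [← hPop]; ring
  -- conclude
  have hA1nn : 0 ≤ A₁ := by rw [hA₁]; positivity
  have hA2nn : 0 ≤ A₂ := by rw [hA₂]; positivity
  have hA3nn : 0 ≤ A₃ := by rw [hA₃]; positivity
  rcases eq_or_lt_of_le hs0 with hs0' | hspos
  · calc Real.sqrt ((C *ᵥ d) ⬝ᵥ (C *ᵥ d)) ≤ Popnorm * s := hstepA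
      _ = 0 := by rw [← hs0', mul_zero]
      _ ≤ Popnorm * (A₁ + A₂ + A₃) := mul_nonneg hPop0 (by linarith)
  · have hKs : s ≤ A₁ + A₂ + A₃ := by
      have h2 : (T0:ℝ) * s ≤ Real.sqrt (u₁ ⬝ᵥ (Q⁻¹ *ᵥ u₁)) + Real.sqrt (u₂ ⬝ᵥ (Q⁻¹ *ᵥ u₂))
          + Real.sqrt (T0:ℝ) * Real.sqrt (eR ⬝ᵥ (W *ᵥ eR)) := by
        have h3 : ((T0:ℝ) * s) * s ≤ (Real.sqrt (u₁ ⬝ᵥ (Q⁻¹ *ᵥ u₁))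
            + Real.sqrt (u₂ ⬝ᵥ (Q⁻¹ *ᵥ u₂))
            + Real.sqrt (T0:ℝ) * Real.sqrt (eR ⬝ᵥ (W *ᵥ eR))) * s := by
          calc ((T0:ℝ) * s) * s = (T0:ℝ) * (s * s) := by ring
            _ ≤ _ := hmain
        exact le_of_mul_le_mul_right h3 hspos
      have hsq : Real.sqrt (T0:ℝ) * Real.sqrt (T0:ℝ) = (T0:ℝ) :=
        Real.mul_self_sqrt (le_of_lt hT0R)
      have hsp : (0:ℝ) < Real.sqrt (T0:ℝ) := Real.sqrt_pos.mpr hT0R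
      have hsum : A₁ + A₂ + A₃ = (Real.sqrt (u₁ ⬝ᵥ (Q⁻¹ *ᵥ u₁))
          + Real.sqrt (u₂ ⬝ᵥ (Q⁻¹ *ᵥ u₂))
          + Real.sqrt (T0:ℝ) * Real.sqrt (eR ⬝ᵥ (W *ᵥ eR))) / (T0:ℝ) := by
        rw [hA₁, hA₂, hA₃]
        have h3 : (1 / Real.sqrt (T0:ℝ)) * Real.sqrt (eR ⬝ᵥ (W *ᵥ eR))
            = Real.sqrt (T0:ℝ) * Real.sqrt (eR ⬝ᵥ (W *ᵥ eR)) / (T0:ℝ) := by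
          rw [one_div, inv_mul_eq_div, div_eq_div_iff hsp.ne' hT0R.ne']
          linear_combination (-Real.sqrt (eR ⬝ᵥ (W *ᵥ eR))) * hsq
        rw [h3]
        field_simp
      rw [hsum, le_div_iff₀ hT0R]
      linarith [h2]
    calc Real.sqrt ((C *ᵥ d) ⬝ᵥ (C *ᵥ d)) ≤ Popnorm * s := hstepA
      _ ≤ Popnorm * (A₁ + A₂ + A₃) := mul_le_mul_of_nonneg_left hKs hPop0
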